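/- In any group G containing elements σ_1, …, σ_{n-1} satisfying the braid relations, the band generators satisfy the commutation relation a_{ts} a_{rq} = a_{rq} a_{ts} whenever the pairs {t,s} and {r,q} are non-interleaved, i.e. whenever (t−r)(t−q)(s−r)(s−q) > 0 (the intervals [s,t] and [q,r] are disjoint or one is strictly nested in the other). -/
import Mathlib


/-- The descending product `σ (t-1) * σ (t-2) * ⋯ * σ (s+1)` used to conjugate `σ s`. -/
def bandConj {G : Type*} [Group G] (σ : ℕ → G) (t s : ℕ) : G :=
  (((List.range (t - s - 1)).map (fun i => σ (t - 1 - i))).prod)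

/-- The band generator `a_{t s} = (σ_{t-1} ⋯ σ_{s+1}) σ_s (σ_{s+1}⁻¹ ⋯ σ_{t-1}⁻¹)`. -/
def bandGen {G : Type*} [Group G] (σ : ℕ → G) (t s : ℕ) : G :=
  bandConj σ t s * σ s * (bandConj σ t s)⁻¹

/-- `σ 1, …, σ (n-1)` satisfy the braid relations. -/
def BraidRels {G : Type*} [Group G] (n : ℕ) (σ : ℕ → G) : Prop :=
  (∀ i j, 1 ≤ i → i ≤ n - 1 → 1 ≤ j → j ≤ n - 1 → (i + 2 ≤ j ∨ j + 2 ≤ i) →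
      σ i * σ j = σ j * σ i) ∧
  (∀ i, 1 ≤ i → i ≤ n - 2 → σ i * σ (i + 1) * σ i = σ (i + 1) * σ i * σ (i + 1))

/-- Recursion for `bandConj`, peeling off the top letter. -/
lemma bandConj_succ {G : Type*} [Group G] (σ : ℕ → G) {t s : ℕ} (h : s + 2 ≤ t) :
    bandConj σ t s = σ (t - 1) * bandConj σ (t - 1) s := by
  unfold bandConj
  have h1 : t - s - 1 = (t - 1 - s - 1) + 1 := by omega
  rw [h1, List.range_succ_eq_map, List.map_cons, List.map_map, List.prod_cons]
  congr 2
  apply List.map_congr_left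
  intro a ha
  simp only [Function.comp_apply]
  congr 1
  omega

/-- If `g` commutes with every letter of `bandConj σ t s`, it commutes with the product. -/
lemma commute_bandConj {G : Type*} [Group G] (σ : ℕ → G) (g : G) (t s : ℕ)
    (hc : ∀ k, s + 1 ≤ k → k + 1 ≤ t → Commute g (σ k)) :
    Commute g (bandConj σ t s) := by
  unfold bandConj
  apply Commute.list_prod_right
  intro x hx
  simp only [List.mem_map, List.mem_range] at hx
  obtain ⟨i, hi, rfl⟩ := hx
  exact hc _ (by omega) (by omega)

/-- If `g` commutes with `σ k` for `s ≤ k ≤ t-1`, then it commutes with `bandGen σ t s`. -/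
lemma commute_bandGen {G : Type*} [Group G] (σ : ℕ → G) (g : G) (t s : ℕ) (hst : s < t)
    (hc : ∀ k, s ≤ k → k + 1 ≤ t → Commute g (σ k)) :
    Commute g (bandGen σ t s) := by
  have hC : Commute g (bandConj σ t s) :=
    commute_bandConj σ g t s (fun k hk1 hk2 => hc k (by omega) hk2)
  exact (hC.mul_right (hc s le_rfl hst)).mul_right hC.inv_right

/-- Key lemma: `σ j` slides past the descending product, becoming `σ (j+1)`. -/
lemma sigma_mul_bandConj {G : Type*} [Group G] {n : ℕ} {σ : ℕ → G} (h : BraidRels n σ)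
    {s j : ℕ} (hs : 1 ≤ s) (hj : s + 1 ≤ j) :
    ∀ t, j + 2 ≤ t → t ≤ n →
      σ j * bandConj σ t s = bandConj σ t s * σ (j + 1) := by
  intro t ht
  induction t, ht using Nat.le_induction with
  | base =>
    intro htn
    have e1 : bandConj σ (j + 2) s = σ (j + 1) * bandConj σ (j + 1) s := by
      have := bandConj_succ σ (t := j + 2) (s := s) (by omega)
      simpa using this
    have e2 : bandConj σ (j + 1) s = σ j * bandConj σ j s := by
      have := bandConj_succ σ (t := j + 1) (s := s) (by omega)
      simpa using this
    have hcom : Commute (σ (j + 1)) (bandConj σ j s) := by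
      apply commute_bandConj
      intro k hk1 hk2
      exact (h.1 (j + 1) k (by omega) (by omega) (by omega) (by omega) (Or.inr (by omega)))
    have hbr : σ j * σ (j + 1) * σ j = σ (j + 1) * σ j * σ (j + 1) :=
      h.2 j (by omega) (by omega)
    rw [e1, e2]
    calc σ j * (σ (j + 1) * (σ j * bandConj σ j s))
        = (σ j * σ (j + 1) * σ j) * bandConj σ j s := by group
      _ = (σ (j + 1) * σ j * σ (j + 1)) * bandConj σ j s := by rw [hbr]
      _ = σ (j + 1) * σ j * (σ (j + 1) * bandConj σ j s) := by group
      _ = σ (j + 1) * σ j * (bandConj σ j s * σ (j + 1)) := by rw [hcom.eq]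
      _ = σ (j + 1) * (σ j * bandConj σ j s) * σ (j + 1) := by group
  | succ t ht ih =>
    intro htn
    have e1 : bandConj σ (t + 1) s = σ t * bandConj σ t s := by
      have := bandConj_succ σ (t := t + 1) (s := s) (by omega)
      simpa using this
    have hfar : σ j * σ t = σ t * σ j :=
      h.1 j t (by omega) (by omega) (by omega) (by omega) (Or.inl (by omega))
    rw [e1, ← mul_assoc, hfar, mul_assoc, ih (by omega), ← mul_assoc, mul_assoc]

/-- `σ j` commutes with `bandGen σ t s` for `s+1 ≤ j ≤ t-2`. -/
lemma commute_sigma_bandGen_inner {G : Type*} [Group G] {n : ℕ} {σ : ℕ → G}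
    (h : BraidRels n σ) {s j t : ℕ} (hs : 1 ≤ s) (hj : s + 1 ≤ j) (hjt : j + 2 ≤ t)
    (htn : t ≤ n) : Commute (σ j) (bandGen σ t s) := by
  set C := bandConj σ t s with hC
  have hB : σ j * C = C * σ (j + 1) := sigma_mul_bandConj h hs hj t hjt htn
  have hBinv : σ (j + 1) * C⁻¹ = C⁻¹ * σ j := by
    have h1 : C⁻¹ * (σ j * C) * C⁻¹ = C⁻¹ * (C * σ (j + 1)) * C⁻¹ := by rw [hB]
    calc σ (j + 1) * C⁻¹ = C⁻¹ * (C * σ (j + 1)) * C⁻¹ := by group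
      _ = C⁻¹ * (σ j * C) * C⁻¹ := h1.symm
      _ = C⁻¹ * σ j := by group
  have hfs : σ (j + 1) * σ s = σ s * σ (j + 1) :=
    h.1 (j + 1) s (by omega) (by omega) (by omega) (by omega) (Or.inr (by omega))
  show σ j * bandGen σ t s = bandGen σ t s * σ j
  unfold bandGen
  rw [← hC]
  calc σ j * (C * σ s * C⁻¹) = (σ j * C) * σ s * C⁻¹ := by group
    _ = (C * σ (j + 1)) * σ s * C⁻¹ := by rw [hB]
    _ = C * (σ (j + 1) * σ s) * C⁻¹ := by group
    _ = C * (σ s * σ (j + 1)) * C⁻¹ := by rw [hfs]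
    _ = C * σ s * (σ (j + 1) * C⁻¹) := by group
    _ = C * σ s * (C⁻¹ * σ j) := by rw [hBinv]
    _ = C * σ s * C⁻¹ * σ j := by group

/-- band generators on non-interleaved pairs commute. -/
theorem bandGen_comm {G : Type*} [Group G] (n : ℕ) (σ : ℕ → G)
    (h : BraidRels n σ) :
    ∀ t s r q : ℕ, 1 ≤ s → s < t → t ≤ n → 1 ≤ q → q < r → r ≤ n →
      ((t : ℤ) - r) * ((t : ℤ) - q) * ((s : ℤ) - r) * ((s : ℤ) - q) > 0 →
      bandGen σ t s * bandGen σ r q = bandGen σ r q * bandGen σ t s := by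
  intro t s r q hq1 hst htn hq2 hqr hrn hpos
  have hcases : r < s ∨ t < q ∨ (q < s ∧ t < r) ∨ (s < q ∧ r < t) := by
    by_contra hc
    push_neg at hc
    obtain ⟨h1, h2, h3, h4⟩ := hc
    rcases lt_trichotomy q s with hqs | hqs | hqs
    · have h5 := h3 hqs
      have ha : (0:ℤ) ≤ (t:ℤ) - r := by omega
      have hb : (0:ℤ) ≤ (t:ℤ) - q := by omega
      have hcc : (s:ℤ) - r ≤ 0 := by omega
      have hd : (0:ℤ) ≤ (s:ℤ) - q := by omega
      nlinarith [mul_nonneg ha hb, mul_nonpos_of_nonpos_of_nonneg hcc hd]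
    · subst hqs; simp at hpos
    · have h5 := h4 hqs
      have ha : (t:ℤ) - r ≤ 0 := by omega
      have hb : (0:ℤ) ≤ (t:ℤ) - q := by omega
      have hcc : (s:ℤ) - r ≤ 0 := by omega
      have hd : (s:ℤ) - q ≤ 0 := by omega
      have key : 0 ≤ ((s:ℤ) - r) * ((s:ℤ) - q) := by nlinarith
      nlinarith [mul_nonpos_of_nonpos_of_nonneg ha hb, key]
  show Commute (bandGen σ t s) (bandGen σ r q)
  rcases hcases with hcase | hcase | ⟨hc1, hc2⟩ | ⟨hc1, hc2⟩
  · -- r < s : disjoint, a_{rq} below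
    apply commute_bandGen σ _ r q hqr
    intro k hk1 hk2
    apply Commute.symm
    apply commute_bandGen σ _ t s hst
    intro m hm1 hm2
    exact h.1 k m (by omega) (by omega) (by omega) (by omega) (Or.inl (by omega))
  · -- t < q : disjoint, a_{ts} below
    apply Commute.symm
    apply commute_bandGen σ _ t s hst
    intro k hk1 hk2
    apply Commute.symm
    apply commute_bandGen σ _ r q hqr
    intro m hm1 hm2
    exact h.1 k m (by omega) (by omega) (by omega) (by omega) (Or.inl (by omega))
  · -- q < s, t < r : [s,t] nested in [q,r]
    apply Commute.symm
    apply commute_bandGen σ _ t s hst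
    intro k hk1 hk2
    exact (commute_sigma_bandGen_inner h hq2 (by omega) (by omega) hrn).symm
  · -- s < q, r < t : [q,r] nested in [s,t]
    apply commute_bandGen σ _ r q hqr
    intro k hk1 hk2
    exact (commute_sigma_bandGen_inner h hq1 (by omega) (by omega) htn).symm
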